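/- Let γ^m and γ^n denote the piecewise linear hat functions on a uniform time grid t_k = kΔt, i.e. γ^m(t) = max(0, 1 - |t - t_m|/Δt). Then for fixed x, y with d := |x - y| ≥ 0, the integral ∫₀^∞ γ^m(t - d) (γ^n)'(t) dt equals -(1/(2Δt²))(t_{n-m+2} - d)² when t_{n-m+1} ≤ d ≤ t_{n-m+2}, equals (1/Δt²)(t_{n-m+1} - d)² + (1/(2Δt²))(t_{n-m} - d)² - 1 when t_{n-m} ≤ d ≤ t_{n-m+1}, equals -[(1/Δt²)(t_{n-m-1} - d)² + (1/(2Δt²))(t_{n-m} - d)² - 1] when t_{n-m-1} ≤ d ≤ t_{n-m}, equals (1/(2Δt²))(t_{n-m-2} - d)² when t_{n-m-2} ≤ d ≤ t_{n-m-1}, and equals 0 otherwise (assuming m, n ≥ 2 so all relevant indices are nonnegative). -/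

import Mathlib

/-!
The hat function is a second difference of the absolute value,
`max 0 (1 - |u|/h) = (|u + h| + |u - h| - 2|u|) / (2h)`, and `u ↦ u|u|/2` is a primitive of `|u|`,
so the hat function has an explicit piecewise quadratic primitive. Since `(γ^n)'` is `±1/Δt` on the
two halves of the support of `γ^n`, the integral is a second difference of that primitive, i.e. a
fourth central difference of `u|u|`, evaluated at `x = t_{n-m} - d`. On each interval between
consecutive grid points all five absolute values have a fixed sign, which gives the five formulas.
-/

open Set MeasureTheory

noncomputable section

theorem hasDerivAt_mul_abs (x : ℝ) : HasDerivAt (fun u : ℝ => u * |u|) (2 * |x|) x := by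
  refine hasDerivAt_of_hasDerivAt_of_ne' (f := fun u : ℝ => u * |u|) (g := fun u => 2 * |u|)
    (x := 0) (fun y hy => ?_) (by fun_prop) (by fun_prop) x
  have := (hasDerivAt_id' y).mul (hasDerivAt_abs hy)
  rwa [one_mul, self_mul_sign, ← two_mul] at this

def hat (h u : ℝ) : ℝ := max 0 (1 - |u| / h)

theorem continuous_hat (h : ℝ) : Continuous (hat h) := by
  unfold hat
  fun_prop

theorem hat_eq_secondDiff_abs {h : ℝ} (hh : 0 < h) (u : ℝ) :
    hat h u = (|u + h| + |u - h| - 2 * |u|) / (2 * h) := by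
  unfold hat
  rw [eq_div_iff (by positivity)]
  rcases le_total |u| h with hu | hu
  · rw [max_eq_right (by rwa [sub_nonneg, div_le_one hh])]
    field_simp
    grind
  · rw [max_eq_left (by rwa [sub_nonpos, one_le_div hh])]
    grind

def hatPrimitive (h u : ℝ) : ℝ :=
  ((u + h) * |u + h| + (u - h) * |u - h| - 2 * (u * |u|)) / (4 * h)

theorem hasDerivAt_hatPrimitive {h : ℝ} (hh : 0 < h) (u : ℝ) :
    HasDerivAt (hatPrimitive h) (hat h u) u := by
  have hplus := HasDerivAt.comp_add_const u h (hasDerivAt_mul_abs (u + h))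
  have hminus := HasDerivAt.comp_sub_const u h (hasDerivAt_mul_abs (u - h))
  rw [hat_eq_secondDiff_abs hh, show (|u + h| + |u - h| - 2 * |u|) / (2 * h) =
    (2 * |u + h| + 2 * |u - h| - 2 * (2 * |u|)) / (4 * h) by field_simp; ring]
  exact ((hplus.add hminus).sub ((hasDerivAt_mul_abs u).const_mul 2)).div_const (4 * h)

theorem integral_hat_sub {h : ℝ} (hh : 0 < h) (a b c : ℝ) :
    ∫ s in a..b, hat h (s - c) = hatPrimitive h (b - c) - hatPrimitive h (a - c) := by
  rw [intervalIntegral.integral_comp_sub_right (hat h)]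
  exact intervalIntegral.integral_eq_sub_of_hasDerivAt (fun u _ => hasDerivAt_hatPrimitive hh u)
    ((continuous_hat h).intervalIntegrable _ _)

theorem setIntegral_Ioi_zero_mul_ite {f : ℝ → ℝ} {a τ b c₁ c₂ : ℝ} (ha : 0 ≤ a)
    (haτ : a ≤ τ) (hτb : τ ≤ b) (hf : IntervalIntegrable f volume a b) :
    ∫ s in Ioi 0, f s * (if a < s ∧ s < τ then c₁ else if τ < s ∧ s < b then c₂ else 0) =
      c₁ * (∫ s in a..τ, f s) + c₂ * ∫ s in τ..b, f s := by
  have hsplit : ∀ s, f s * (if a < s ∧ s < τ then c₁ else if τ < s ∧ s < b then c₂ else 0) =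
      (Ioo a τ).indicator (fun s => c₁ * f s) s + (Ioo τ b).indicator (fun s => c₂ * f s) s := by
    intro s
    simp only [indicator_apply, mem_Ioo]
    split_ifs <;> grind
  have hfab : IntegrableOn f (Ioc a b) :=
    (intervalIntegrable_iff_integrableOn_Ioc_of_le (haτ.trans hτb)).mp hf
  have hf₁ : IntegrableOn (fun s => c₁ * f s) (Ioo a τ) :=
    (hfab.mono_set (Ioo_subset_Ioc_self.trans (Ioc_subset_Ioc_right hτb))).const_mul c₁
  have hf₂ : IntegrableOn (fun s => c₂ * f s) (Ioo τ b) :=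
    (hfab.mono_set (Ioo_subset_Ioc_self.trans (Ioc_subset_Ioc_left haτ))).const_mul c₂
  simp_rw [hsplit]
  rw [integral_add (hf₁.integrable_indicator measurableSet_Ioo).restrict
      (hf₂.integrable_indicator measurableSet_Ioo).restrict,
    setIntegral_indicator measurableSet_Ioo, setIntegral_indicator measurableSet_Ioo,
    inter_eq_self_of_subset_right (Ioo_subset_Ioi_self.trans (Ioi_subset_Ioi ha)),
    inter_eq_self_of_subset_right (Ioo_subset_Ioi_self.trans (Ioi_subset_Ioi (ha.trans haτ))),
    intervalIntegral.integral_of_le haτ, intervalIntegral.integral_of_le hτb,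
    integral_Ioc_eq_integral_Ioo, integral_Ioc_eq_integral_Ioo, integral_const_mul,
    integral_const_mul]

/-- The integral `∫ γ^m(t - d) (γ^n)'(t) dt` as a function of `x = t_{n-m} - d` and `h = Δt`. -/
def hatGalerkin (h x : ℝ) : ℝ :=
  (2 * hatPrimitive h x - hatPrimitive h (x - h) - hatPrimitive h (x + h)) / h

theorem hatGalerkin_eq_piecewise {h : ℝ} (hh : 0 < h) (τ d : ℝ) :
    ((τ + h ≤ d ∧ d ≤ τ + 2 * h) →
      hatGalerkin h (τ - d) = -(1 / (2 * h ^ 2)) * (τ + 2 * h - d) ^ 2) ∧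
    ((τ ≤ d ∧ d ≤ τ + h) →
      hatGalerkin h (τ - d) =
        (1 / h ^ 2) * (τ + h - d) ^ 2 + (1 / (2 * h ^ 2)) * (τ - d) ^ 2 - 1) ∧
    ((τ - h ≤ d ∧ d ≤ τ) →
      hatGalerkin h (τ - d) =
        -((1 / h ^ 2) * (τ - h - d) ^ 2 + (1 / (2 * h ^ 2)) * (τ - d) ^ 2 - 1)) ∧
    ((τ - 2 * h ≤ d ∧ d ≤ τ - h) →
      hatGalerkin h (τ - d) = (1 / (2 * h ^ 2)) * (τ - 2 * h - d) ^ 2) ∧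
    ((d < τ - 2 * h ∨ τ + 2 * h < d) → hatGalerkin h (τ - d) = 0) := by
  unfold hatGalerkin hatPrimitive
  refine ⟨fun hd => ?_, fun hd => ?_, fun hd => ?_, fun hd => ?_,
    fun hd => hd.elim (fun hd => ?_) (fun hd => ?_)⟩ <;>
  · simp (disch := grind) only [abs_of_nonneg, abs_of_nonpos]
    field_simp
    ring

end

theorem stmt10_general (Δt : ℝ) (hΔt : 0 < Δt) (m n : ℤ) (hn : 2 ≤ n)
    (d : ℝ) :
    let t : ℤ → ℝ := fun k => (k : ℝ) * Δt
    let γ : ℤ → ℝ → ℝ := fun j s => max 0 (1 - |s - t j| / Δt)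
    let dγ : ℤ → ℝ → ℝ := fun j s =>
      if t (j-1) < s ∧ s < t j then 1/Δt
      else if t j < s ∧ s < t (j+1) then -(1/Δt) else 0
    let Iv : ℝ := ∫ s in Set.Ioi (0 : ℝ), γ m (s - d) * dγ n s
    ((t (n-m+1) ≤ d ∧ d ≤ t (n-m+2)) → Iv = -(1/(2*Δt^2)) * (t (n-m+2) - d)^2) ∧
    ((t (n-m) ≤ d ∧ d ≤ t (n-m+1)) →
      Iv = (1/Δt^2) * (t (n-m+1) - d)^2 + (1/(2*Δt^2)) * (t (n-m) - d)^2 - 1) ∧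
    ((t (n-m-1) ≤ d ∧ d ≤ t (n-m)) →
      Iv = -((1/Δt^2) * (t (n-m-1) - d)^2 + (1/(2*Δt^2)) * (t (n-m) - d)^2 - 1)) ∧
    ((t (n-m-2) ≤ d ∧ d ≤ t (n-m-1)) → Iv = (1/(2*Δt^2)) * (t (n-m-2) - d)^2) ∧
    ((d < t (n-m-2) ∨ t (n-m+2) < d) → Iv = 0) := by
  intro t γ dγ Iv
  have ht : ∀ k : ℤ, t k = k * Δt := fun _ => rfl
  have hmono : Monotone t := fun j k hjk =>
    mul_le_mul_of_nonneg_right (by exact_mod_cast hjk) hΔt.le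
  have hIv : Iv = hatGalerkin Δt (t (n - m) - d) := by
    have ht₀ : 0 ≤ t (n - 1) := by
      rw [ht]
      exact mul_nonneg (by exact_mod_cast (by omega : (0 : ℤ) ≤ n - 1)) hΔt.le
    have hγ : ∀ s, γ m (s - d) = hat Δt (s - (d + t m)) := fun s => by
      simp only [γ, hat, sub_sub]
    have hc : Continuous fun s => hat Δt (s - (d + t m)) :=
      (continuous_hat Δt).comp (continuous_sub_right _)
    simp only [Iv, hγ, dγ]
    rw [setIntegral_Ioi_zero_mul_ite ht₀ (hmono (by omega)) (hmono (by omega))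
        (hc.intervalIntegrable _ _), integral_hat_sub hΔt, integral_hat_sub hΔt,
      show t n - (d + t m) = t (n - m) - d by simp only [ht]; push_cast; ring,
      show t (n - 1) - (d + t m) = t (n - m) - d - Δt by simp only [ht]; push_cast; ring,
      show t (n + 1) - (d + t m) = t (n - m) - d + Δt by simp only [ht]; push_cast; ring]
    unfold hatGalerkin
    ring
  rw [hIv, show t (n - m + 1) = t (n - m) + Δt by simp only [ht]; push_cast; ring,
    show t (n - m + 2) = t (n - m) + 2 * Δt by simp only [ht]; push_cast; ring,
    show t (n - m - 1) = t (n - m) - Δt by simp only [ht]; push_cast; ring,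
    show t (n - m - 2) = t (n - m) - 2 * Δt by simp only [ht]; push_cast; ring]
  exact hatGalerkin_eq_piecewise hΔt (t (n - m)) d

/-- Explicit time-integral formula for the Galerkin matrix with piecewise linear
hat functions `γ^m(t) = max(0, 1 - |t - t_m|/Δt)` on the uniform grid `t_k = kΔt`,
where `dγ^n` is the weak derivative of `γ^n` (equal to `1/Δt` on `(t_{n-1},t_n)`,
`-1/Δt` on `(t_n,t_{n+1})`, `0` otherwise). -/
theorem stmt10 (Δt : ℝ) (hΔt : 0 < Δt) (m n : ℤ) (hm : 2 ≤ m) (hn : 2 ≤ n)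
    (d : ℝ) (hd : 0 ≤ d) :
    let t : ℤ → ℝ := fun k => (k : ℝ) * Δt
    let γ : ℤ → ℝ → ℝ := fun j s => max 0 (1 - |s - t j| / Δt)
    let dγ : ℤ → ℝ → ℝ := fun j s =>
      if t (j-1) < s ∧ s < t j then 1/Δt
      else if t j < s ∧ s < t (j+1) then -(1/Δt) else 0
    let Iv : ℝ := ∫ s in Set.Ioi (0 : ℝ), γ m (s - d) * dγ n s
    ((t (n-m+1) ≤ d ∧ d ≤ t (n-m+2)) → Iv = -(1/(2*Δt^2)) * (t (n-m+2) - d)^2) ∧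
    ((t (n-m) ≤ d ∧ d ≤ t (n-m+1)) →
      Iv = (1/Δt^2) * (t (n-m+1) - d)^2 + (1/(2*Δt^2)) * (t (n-m) - d)^2 - 1) ∧
    ((t (n-m-1) ≤ d ∧ d ≤ t (n-m)) →
      Iv = -((1/Δt^2) * (t (n-m-1) - d)^2 + (1/(2*Δt^2)) * (t (n-m) - d)^2 - 1)) ∧
    ((t (n-m-2) ≤ d ∧ d ≤ t (n-m-1)) → Iv = (1/(2*Δt^2)) * (t (n-m-2) - d)^2) ∧
    ((d < t (n-m-2) ∨ t (n-m+2) < d) → Iv = 0) :=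
  stmt10_general Δt hΔt m n hn d
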